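/- Assume the diagonal conditioner ϕ : ℝ → ℝ is differentiable and 1-Lipschitz, and that the coordinates u_1,…,u_d of u are independent with E[u_i] = 0 and E[u_i²] = 1. For u ∈ ℝ^d let J(λ, u) denote the Jacobian of the map λ ↦ T_λ(u) from the parameter space Λ (coordinates m, s, and the strictly lower-triangular entries of L) to ℝ^d. Then E[J(λ,u)ᵀ J(λ,u)] is the diagonal matrix whose block for the m-coordinates is the identity, whose block for the s-coordinates is diag(ϕ'(s_1)², …, ϕ'(s_d)²), and whose block for the L-coordinates is the identity; in particular ‖E[J(λ,u)ᵀ J(λ,u)]‖₂ ≤ 1. -/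

import Mathlib

open MeasureTheory ProbabilityTheory Matrix

noncomputable section

abbrev Euc (d : ℕ) := EuclideanSpace ℝ (Fin d)

/-- Indices of the strictly lower-triangular entries of a `d × d` matrix. -/
abbrev LowIdx (d : ℕ) := {p : Fin d × Fin d // p.2 < p.1}

/-- Index set for the parameters `λ = (m, s, L)` of the full-rank Cholesky
location-scale family. -/
abbrev ParamIdx (d : ℕ) := (Fin d) ⊕ ((Fin d) ⊕ (LowIdx d))

/-- The parameter space `Λ`. -/
abbrev Param (d : ℕ) := EuclideanSpace ℝ (ParamIdx d)

def mOf {d : ℕ} (lam : Param d) (i : Fin d) : ℝ := lam (Sum.inl i)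
def sOf {d : ℕ} (lam : Param d) (i : Fin d) : ℝ := lam (Sum.inr (Sum.inl i))
def LOf {d : ℕ} (lam : Param d) (i j : Fin d) : ℝ :=
  if h : j < i then lam (Sum.inr (Sum.inr ⟨(i, j), h⟩)) else 0

/-- The location-scale reparameterization `T_λ(u) = C u + m` where
`C = diag(ϕ(s₁),…,ϕ(s_d)) + L`. -/
def Tmap {d : ℕ} (ϕ : ℝ → ℝ) (lam : Param d) (u : Fin d → ℝ) : Euc d :=
  WithLp.toLp 2 fun i => mOf lam i + ϕ (sOf lam i) * u i + ∑ j, LOf lam i j * u j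

/-- The Jacobian of `λ ↦ T_λ(u)`, as a `d × (dim Λ)` matrix whose columns are the
partial derivatives of `T_λ(u)` along the coordinates of the parameter space. -/
def Jmat {d : ℕ} (ϕ : ℝ → ℝ) (lam : Param d) (u : Fin d → ℝ) :
    Matrix (Fin d) (ParamIdx d) ℝ :=
  Matrix.of fun i k => fderiv ℝ (fun l => Tmap ϕ l u i) lam (EuclideanSpace.single k 1)

/-- The `ℓ₂` operator norm of a matrix. -/
def l2opNorm {κ ι : Type*} [Fintype κ] [Fintype ι] [DecidableEq ι]
    (A : Matrix κ ι ℝ) : ℝ :=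
  ‖LinearMap.toContinuousLinearMap (Matrix.toEuclideanLin A)‖

/-! Every parameter `λ_k` enters exactly one coordinate `row k` of `T_λ(u)`, through a single
term `g_k(λ_k) · ũ_{col k}`, where `ũ = (1, u₁, …, u_d)`, `g_k = ϕ` on the `s`-coordinates and
`g_k = id` otherwise. Hence
`(JᵀJ)_{kk'} = [row k = row k'] g_k'(λ_k) g_{k'}'(λ_{k'}) ũ_{col k} ũ_{col k'}`.
By independence, centering and unit variance the coordinates of `ũ` are orthonormal in `L²(μ)`,
and `k ↦ (row k, col k)` is injective, so `E[JᵀJ] = diag(g_k'(λ_k)²)`; its `ℓ₂` operator norm is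
`max_k g_k'(λ_k)² ≤ 1` because every `g_k` is `1`-Lipschitz. -/

theorem fderiv_sum_apply_single {ι : Type*} [Fintype ι] [DecidableEq ι] {ψ : ι → ℝ → ℝ}
    {x : EuclideanSpace ℝ ι} (hψ : ∀ k, DifferentiableAt ℝ (ψ k) (x k)) (k : ι) :
    fderiv ℝ (fun y : EuclideanSpace ℝ ι => ∑ k, ψ k (y k)) x (EuclideanSpace.single k 1)
      = deriv (ψ k) (x k) := by
  have hF : HasFDerivAt (fun y : EuclideanSpace ℝ ι => ∑ k, ψ k (y k))
      (∑ k, deriv (ψ k) (x k) • EuclideanSpace.proj (𝕜 := ℝ) k) x :=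
    HasFDerivAt.fun_sum fun k _ =>
      (hψ k).hasDerivAt.comp_hasFDerivAt x (EuclideanSpace.proj (𝕜 := ℝ) k).hasFDerivAt
  simp [hF.fderiv]

def augment {ι : Type*} (x : ι → ℝ) (o : Option ι) : ℝ := o.elim 1 x

section Param

variable {d : ℕ}

-- Reducible, so that `Decidable (paramRow k = i)` unfolds along with the proposition.
abbrev paramRow : ParamIdx d → Fin d
  | .inl i | .inr (.inl i) => i
  | .inr (.inr p) => p.1.1

def paramCol : ParamIdx d → Option (Fin d)
  | .inl _ => none
  | .inr (.inl i) => some i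
  | .inr (.inr p) => some p.1.2

def paramConditioner (ϕ : ℝ → ℝ) : ParamIdx d → ℝ → ℝ
  | .inr (.inl _) => ϕ
  | _ => id

theorem paramRow_paramCol_injective :
    Function.Injective fun k : ParamIdx d => (paramRow k, paramCol k) := by
  rintro (a | a | ⟨⟨i, j⟩, hij⟩) (b | b | ⟨⟨i', j'⟩, hij'⟩) h <;>
    simp_all [paramRow, paramCol]
  all_goals obtain ⟨rfl, rfl⟩ := h; exact lt_irrefl _ ‹_›

theorem Tmap_apply_eq_sum (ϕ : ℝ → ℝ) (lam : Param d) (u : Fin d → ℝ) (i : Fin d) :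
    Tmap ϕ lam u i = ∑ k, if paramRow k = i then
      paramConditioner ϕ k (lam k) * augment u (paramCol k) else 0 := by
  have hL : ∑ p : LowIdx d, (if p.1.1 = i then lam (Sum.inr (Sum.inr p)) * u p.1.2 else 0)
      = ∑ j, LOf lam i j * u j := by
    calc _ = ∑ p : Fin d × Fin d, if h : p.2 < p.1 then
            (if p.1 = i then lam (Sum.inr (Sum.inr ⟨p, h⟩)) * u p.2 else 0) else 0 := by
          rw [Finset.sum_dite, Finset.sum_const_zero, add_zero]
          exact ((Equiv.subtypeEquivRight (by simp)).sum_comp _).symm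
      _ = _ := by
          rw [Fintype.sum_prod_type, Fintype.sum_eq_single i fun i' hi' => by simp [hi']]
          simp [LOf]
  simp [Tmap, mOf, sOf, ← hL, Fintype.sum_sum_type, paramRow, paramConditioner, paramCol,
    augment, add_assoc]

theorem differentiable_paramConditioner {ϕ : ℝ → ℝ} (hϕ : Differentiable ℝ ϕ) (k : ParamIdx d) :
    Differentiable ℝ (paramConditioner ϕ k) := by
  rcases k with _ | _ | _
  exacts [differentiable_id, hϕ, differentiable_id]

theorem lipschitzWith_paramConditioner {ϕ : ℝ → ℝ} (hϕ : LipschitzWith 1 ϕ) (k : ParamIdx d) :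
    LipschitzWith 1 (paramConditioner ϕ k) := by
  rcases k with _ | _ | _
  exacts [LipschitzWith.id, hϕ, LipschitzWith.id]

theorem Jmat_apply {ϕ : ℝ → ℝ} (hϕ : Differentiable ℝ ϕ) (lam : Param d) (u : Fin d → ℝ)
    (i : Fin d) (k : ParamIdx d) :
    Jmat ϕ lam u i k = if paramRow k = i then
      deriv (paramConditioner ϕ k) (lam k) * augment u (paramCol k) else 0 := by
  let ψ : ParamIdx d → ℝ → ℝ := fun k x =>
    if paramRow k = i then paramConditioner ϕ k x * augment u (paramCol k) else 0
  have hT : (fun l : Param d => Tmap ϕ l u i) = fun l => ∑ k, ψ k (l k) :=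
    funext fun l => Tmap_apply_eq_sum ϕ l u i
  rw [Jmat, of_apply, hT, fderiv_sum_apply_single]
  · simp only [ψ]
    split_ifs <;> simp [deriv_mul_const (differentiable_paramConditioner hϕ k _)]
  · intro k
    simp only [ψ]
    split_ifs
    · exact ((differentiable_paramConditioner hϕ k).mul_const _).differentiableAt
    · exact differentiableAt_const 0

theorem transpose_Jmat_mul_Jmat_apply {ϕ : ℝ → ℝ} (hϕ : Differentiable ℝ ϕ) (lam : Param d)
    (u : Fin d → ℝ) (k k' : ParamIdx d) :
    ((Jmat ϕ lam u)ᵀ * Jmat ϕ lam u) k k' = if paramRow k = paramRow k' then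
      deriv (paramConditioner ϕ k) (lam k) * deriv (paramConditioner ϕ k') (lam k') *
        (augment u (paramCol k) * augment u (paramCol k')) else 0 := by
  simp only [mul_apply, transpose_apply, Jmat_apply hϕ, ite_mul, zero_mul, mul_ite, mul_zero]
  rw [Finset.sum_ite_eq, if_pos (Finset.mem_univ _)]
  split_ifs <;> ring

end Param

theorem integral_augment_mul_augment {ι Ω : Type*} [DecidableEq ι] [MeasurableSpace Ω]
    {μ : Measure Ω} [IsProbabilityMeasure μ] {X : ι → Ω → ℝ} (hmeas : ∀ i, Measurable (X i))
    (hindep : iIndepFun X μ) (hmean : ∀ i, ∫ ω, X i ω ∂μ = 0)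
    (hvar : ∀ i, ∫ ω, X i ω ^ 2 ∂μ = 1) (a b : Option ι) :
    ∫ ω, augment (fun i => X i ω) a * augment (fun i => X i ω) b ∂μ = if a = b then 1 else 0 := by
  rcases a with _ | i <;> rcases b with _ | j
  · simp [augment]
  · simp [augment, hmean]
  · simp [augment, hmean]
  · by_cases hij : i = j
    · subst hij
      simp [augment, ← sq, hvar]
    · simp only [augment, Option.elim, Option.some.injEq, hij, if_false]
      rw [(hindep.indepFun hij).integral_fun_mul_eq_mul_integral (hmeas i).aestronglyMeasurable
        (hmeas j).aestronglyMeasurable, hmean, zero_mul]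

theorem integral_transpose_Jmat_mul_Jmat {d : ℕ} {Ω : Type*} [MeasurableSpace Ω]
    (μ : Measure Ω) [IsProbabilityMeasure μ] (u : Ω → Fin d → ℝ) {ϕ : ℝ → ℝ}
    (hϕ : Differentiable ℝ ϕ) (hmeas : ∀ i, Measurable fun ω => u ω i)
    (hindep : iIndepFun (fun i ω => u ω i) μ) (hmean : ∀ i, ∫ ω, u ω i ∂μ = 0)
    (hvar : ∀ i, ∫ ω, (u ω i) ^ 2 ∂μ = 1) (lam : Param d) :
    (of fun k k' => ∫ ω, ((Jmat ϕ lam (u ω))ᵀ * Jmat ϕ lam (u ω)) k k' ∂μ)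
      = diagonal fun k => deriv (paramConditioner ϕ k) (lam k) ^ 2 := by
  ext k k'
  simp only [of_apply, transpose_Jmat_mul_Jmat_apply hϕ]
  by_cases hkk' : k = k'
  · subst hkk'
    simp [integral_const_mul, integral_augment_mul_augment hmeas hindep hmean hvar, sq]
  · rw [diagonal_apply_ne _ hkk']
    split_ifs with hrow
    · rw [integral_const_mul, integral_augment_mul_augment hmeas hindep hmean hvar,
        if_neg fun hcol => hkk' (paramRow_paramCol_injective (Prod.ext hrow hcol)), mul_zero]
    · exact integral_zero _ _

open scoped Matrix.Norms.L2Operator in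
theorem l2opNorm_diagonal {ι : Type*} [Fintype ι] [DecidableEq ι] (v : ι → ℝ) :
    l2opNorm (diagonal v) = ‖v‖ :=
  l2_opNorm_diagonal v

theorem expected_squared_jacobian_general
    {d : ℕ} {Ω : Type*} [MeasurableSpace Ω] (μ : Measure Ω) [IsProbabilityMeasure μ]
    (u : Ω → Fin d → ℝ) (ϕ : ℝ → ℝ)
    (hϕdiff : Differentiable ℝ ϕ) (hϕlip : LipschitzWith 1 ϕ)
    (hmeas : ∀ i, Measurable fun ω => u ω i)
    (hindep : iIndepFun (fun i ω => u ω i) μ)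
    (hmean : ∀ i, ∫ ω, u ω i ∂μ = 0)
    (hvar : ∀ i, ∫ ω, (u ω i) ^ 2 ∂μ = 1)
    (lam : Param d) :
    (Matrix.of fun k k' =>
        ∫ ω, ((Jmat ϕ lam (u ω))ᵀ * Jmat ϕ lam (u ω)) k k' ∂μ)
      = Matrix.diagonal
          (Sum.elim (fun _ : Fin d => (1 : ℝ))
            (Sum.elim (fun i : Fin d => (deriv ϕ (sOf lam i)) ^ 2)
              (fun _ : LowIdx d => (1 : ℝ)))) ∧
    l2opNorm
      (Matrix.of fun k k' =>
        ∫ ω, ((Jmat ϕ lam (u ω))ᵀ * Jmat ϕ lam (u ω)) k k' ∂μ) ≤ 1 := by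
  have hdiag : Sum.elim (fun _ : Fin d => (1 : ℝ))
      (Sum.elim (fun i : Fin d => (deriv ϕ (sOf lam i)) ^ 2) (fun _ : LowIdx d => (1 : ℝ)))
        = fun k => deriv (paramConditioner ϕ k) (lam k) ^ 2 := by
    ext (_ | _ | _) <;> simp [paramConditioner, sOf]
  rw [hdiag, integral_transpose_Jmat_mul_Jmat μ u hϕdiff hmeas hindep hmean hvar lam,
    l2opNorm_diagonal]
  refine ⟨rfl, pi_norm_le_iff_of_nonneg zero_le_one |>.mpr fun k => ?_⟩
  simpa using norm_deriv_le_of_lipschitz (lipschitzWith_paramConditioner hϕlip k)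

/-- For a differentiable `1`-Lipschitz diagonal conditioner `ϕ` and
`u` with independent, centered, unit-variance coordinates, `E[J(λ,u)ᵀ J(λ,u)]` is the
diagonal matrix whose `m`-block is the identity, whose `s`-block is
`diag(ϕ'(s₁)², …, ϕ'(s_d)²)`, and whose `L`-block is the identity; in particular its
`ℓ₂` operator norm is at most `1`. -/
theorem expected_squared_jacobian
    {d : ℕ} {Ω : Type*} [MeasurableSpace Ω] (μ : Measure Ω) [IsProbabilityMeasure μ]
    (u : Ω → Fin d → ℝ) (ϕ : ℝ → ℝ)
    (hϕdiff : Differentiable ℝ ϕ) (hϕlip : LipschitzWith 1 ϕ)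
    (hmeas : ∀ i, Measurable fun ω => u ω i)
    (hindep : iIndepFun (fun i ω => u ω i) μ)
    (hmean : ∀ i, ∫ ω, u ω i ∂μ = 0)
    (hvar : ∀ i, ∫ ω, (u ω i) ^ 2 ∂μ = 1)
    (hint1 : ∀ i, Integrable (fun ω => u ω i) μ)
    (hint2 : ∀ i, Integrable (fun ω => (u ω i) ^ 2) μ)
    (lam : Param d) :
    (Matrix.of fun k k' =>
        ∫ ω, ((Jmat ϕ lam (u ω))ᵀ * Jmat ϕ lam (u ω)) k k' ∂μ)
      = Matrix.diagonal
          (Sum.elim (fun _ : Fin d => (1 : ℝ))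
            (Sum.elim (fun i : Fin d => (deriv ϕ (sOf lam i)) ^ 2)
              (fun _ : LowIdx d => (1 : ℝ)))) ∧
    l2opNorm
      (Matrix.of fun k k' =>
        ∫ ω, ((Jmat ϕ lam (u ω))ᵀ * Jmat ϕ lam (u ω)) k k' ∂μ) ≤ 1 :=
  expected_squared_jacobian_general μ u ϕ hϕdiff hϕlip hmeas hindep hmean hvar lam

end
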